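/- arXiv:2406.12854 — 2 statements merged into one kernel-verified Lean document; each statement's English description precedes it below -/
import Mathlib

section
/- For n ∉ {1,2}, the squared L^2 norm of p_n(x) = H_n(x) + 4n H_{n-2}(x) + 4n(n-3) H_{n-4}(x) with respect to the weight e^{-x^2}/(1+2x^2)^2 equals √π · 2^n n! / ((n-1)(n-2)); equivalently, the normalized polynomials q_n(x) = (((n-1)(n-2))^{1/2} / (π^{1/4} (2^n n!)^{1/2})) p_n(x) are orthonormal. -/
/-!
Everything reduces to the Gaussian functional `P ↦ ∫ P(x) e^{-x²} dx` on polynomials, which kills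
`P' - 2xP` because that is the derivative of the decaying function `P(x) e^{-x²}`. Applied to
`H_{k+1} H_k` this gives `‖H_{k+1}‖² = 2(k+1) ‖H_k‖²`, hence `‖H_n‖² = √π 2ⁿ n!`.

For `n = m + 3` the three-term recurrence gives `p_n = 2((1 + 2x²) H_{m+1} + 4x H_m)`, and
differentiating `16 x H_m² e^{-x²} / (1 + 2x²)` with `H_m' = 2x H_m - H_{m+1}` shows that
`p_n² e^{-x²} / (1 + 2x²)²` and `(4 H_{m+1}² + 16 H_m²) e^{-x²}` differ by an integrable exact
derivative, so `‖p_n‖² = 4 ‖H_{m+1}‖² + 16 ‖H_m‖²`. For `n = 0` the primitive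
`-x e^{-x²} / (2(1 + 2x²))` plays the same role.
-/

open Polynomial MeasureTheory

/-- Physicists' Hermite polynomials `H_n`, satisfying `H_{n+1} = 2x H_n - 2n H_{n-1}`,
equivalently given by the Rodrigues formula `H_n(x) = (-1)^n e^{x^2} (d/dx)^n e^{-x^2}`. -/
noncomputable def hermiteP : ℕ → Polynomial ℝ
  | 0 => 1
  | 1 => C 2 * X
  | (n + 2) => C 2 * X * hermiteP (n + 1) - C (2 * ((n : ℝ) + 1)) * hermiteP n

/-- `H_k` extended by `0` for `k < 0`. -/
noncomputable def Hz (k : ℤ) : Polynomial ℝ :=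
  if k < 0 then 0 else hermiteP k.toNat

/-- Unnormalized exceptional Hermite polynomials
`p_n = H_n + 4n H_{n-2} + 4n(n-3) H_{n-4}` (and `0` for negative index). -/
noncomputable def pE (k : ℤ) : Polynomial ℝ :=
  if k < 0 then 0 else
    Hz k + C (4 * (k : ℝ)) * Hz (k - 2) + C (4 * (k : ℝ) * ((k : ℝ) - 3)) * Hz (k - 4)

lemma integrable_eval_mul_exp_neg_sq (P : ℝ[X]) :
    Integrable fun x : ℝ => P.eval x * Real.exp (-x ^ 2) := by
  have monomial (i : ℕ) : Integrable fun x : ℝ => x ^ i * Real.exp (-x ^ 2) := by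
    simpa [Real.rpow_natCast] using
      integrable_rpow_mul_exp_neg_mul_sq one_pos (neg_one_lt_zero.trans_le i.cast_nonneg)
  simp_rw [eval_eq_sum_range, Finset.sum_mul, mul_assoc]
  exact integrable_finsetSum _ fun i _ => (monomial i).const_mul _

lemma integrable_eval_mul_exp_neg_sq_div (P : ℝ[X]) {g : ℝ → ℝ} (hg : Measurable g)
    (hg_one : ∀ x, 1 ≤ g x) :
    Integrable fun x : ℝ => P.eval x * Real.exp (-x ^ 2) / g x := by
  simp_rw [div_eq_mul_inv]
  refine (integrable_eval_mul_exp_neg_sq P).mul_bdd (c := 1) hg.inv.aestronglyMeasurable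
    (.of_forall fun x => ?_)
  rw [norm_inv, Real.norm_of_nonneg (zero_le_one.trans (hg_one x))]
  exact inv_le_one_of_one_le₀ (hg_one x)

lemma hasDerivAt_eval_mul_exp_neg_sq (P : ℝ[X]) (x : ℝ) :
    HasDerivAt (fun y => P.eval y * Real.exp (-y ^ 2))
      ((derivative P - C 2 * X * P).eval x * Real.exp (-x ^ 2)) x := by
  have hexp : HasDerivAt (fun y => Real.exp (-y ^ 2)) (-(2 * x) * Real.exp (-x ^ 2)) x := by
    simpa [mul_comm] using ((hasDerivAt_pow 2 x).neg).exp
  refine ((P.hasDerivAt x).mul hexp).congr_deriv ?_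
  simp only [eval_sub, eval_mul, eval_C, eval_X]
  ring

noncomputable def gaussianFunctional : ℝ[X] →ₗ[ℝ] ℝ where
  toFun P := ∫ x, P.eval x * Real.exp (-x ^ 2)
  map_add' P Q := by
    simp only [eval_add, add_mul]
    exact integral_add (integrable_eval_mul_exp_neg_sq P) (integrable_eval_mul_exp_neg_sq Q)
  map_smul' c P := by
    simp only [eval_smul, smul_eq_mul, mul_assoc, integral_const_mul, RingHom.id_apply]

lemma gaussianFunctional_one : gaussianFunctional 1 = Real.sqrt Real.pi := by
  simpa [gaussianFunctional] using integral_gaussian 1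

lemma gaussianFunctional_derivative_sub (P : ℝ[X]) :
    gaussianFunctional (derivative P - C 2 * X * P) = 0 :=
  integral_eq_zero_of_hasDerivAt_of_integrable (hasDerivAt_eval_mul_exp_neg_sq P)
    (integrable_eval_mul_exp_neg_sq _) (integrable_eval_mul_exp_neg_sq P)

lemma integral_eq_gaussianFunctional_of_hasDerivAt (P Q : ℝ[X]) {g f : ℝ → ℝ}
    (hg : Measurable g) (hg_one : ∀ x, 1 ≤ g x) (hf : Integrable f)
    (hderiv : ∀ x, HasDerivAt (fun y => P.eval y * Real.exp (-y ^ 2) / g y)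
      (Q.eval x * Real.exp (-x ^ 2) - f x) x) :
    ∫ x, f x = gaussianFunctional Q := by
  have hQ := integrable_eval_mul_exp_neg_sq Q
  have := integral_eq_zero_of_hasDerivAt_of_integrable hderiv (hQ.sub hf)
    (integrable_eval_mul_exp_neg_sq_div P hg hg_one)
  rw [integral_sub hQ hf, sub_eq_zero] at this
  exact this.symm

theorem derivative_hermiteP_succ :
    ∀ n : ℕ, derivative (hermiteP (n + 1)) = C (2 * ((n : ℝ) + 1)) * hermiteP n
  | 0 => by simp [hermiteP]
  | 1 => by
    simp only [hermiteP, derivative_sub, derivative_mul, derivative_C, derivative_X,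
      derivative_one, map_mul, map_add, Nat.cast_one, map_one]
    ring
  | n + 2 => by
    rw [hermiteP, derivative_sub, derivative_mul, derivative_mul, derivative_C_mul,
      derivative_hermiteP_succ (n + 1), derivative_hermiteP_succ n]
    simp only [hermiteP, derivative_C, derivative_X, map_mul, map_add, map_natCast, map_one]
    push_cast
    ring

theorem derivative_hermiteP (n : ℕ) :
    derivative (hermiteP n) = C 2 * X * hermiteP n - hermiteP (n + 1) := by
  cases n with
  | zero => simp [hermiteP]
  | succ k => rw [derivative_hermiteP_succ, hermiteP]; ring

lemma derivative_sub_mul_hermiteP_mul_hermiteP (k : ℕ) :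
    derivative (hermiteP (k + 1) * hermiteP k) - C 2 * X * (hermiteP (k + 1) * hermiteP k)
      = C (2 * ((k : ℝ) + 1)) * hermiteP k ^ 2 - hermiteP (k + 1) ^ 2 := by
  rw [derivative_mul, derivative_hermiteP_succ, derivative_hermiteP k]
  ring

theorem gaussianFunctional_hermiteP_sq (n : ℕ) :
    gaussianFunctional (hermiteP n ^ 2) = Real.sqrt Real.pi * 2 ^ n * n.factorial := by
  induction n with
  | zero => simp [hermiteP, gaussianFunctional_one]
  | succ k ih =>
    have h := gaussianFunctional_derivative_sub (hermiteP (k + 1) * hermiteP k)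
    rw [derivative_sub_mul_hermiteP_mul_hermiteP, map_sub, ← smul_eq_C_mul, map_smul, ih,
      sub_eq_zero, smul_eq_mul] at h
    rw [← h, Nat.factorial_succ]
    push_cast
    ring

lemma Hz_natCast (k : ℕ) : Hz k = hermiteP k := by
  simp [Hz]

lemma pE_zero : pE 0 = 1 := by
  simp [pE, Hz, hermiteP]

lemma pE_natCast_add_three (m : ℕ) :
    pE ((m + 3 : ℕ) : ℤ)
      = C 2 * ((1 + C 2 * X ^ 2) * hermiteP (m + 1) + C 4 * X * hermiteP m) := by
  have h2 : ((m + 3 : ℕ) : ℤ) - 2 = ((m + 1 : ℕ) : ℤ) := by push_cast; ring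
  rw [pE, if_neg (by omega), h2, Hz_natCast, Hz_natCast]
  cases m with
  | zero =>
    -- the `Hz (-1)` term carries the coefficient `4 * 3 * (3 - 3) = 0`
    push_cast
    simp only [hermiteP, Nat.cast_one, map_mul, map_sub, map_add, map_natCast, map_one, map_ofNat]
    ring
  | succ j =>
    rw [show ((j + 1 + 3 : ℕ) : ℤ) - 4 = j by push_cast; ring, Hz_natCast]
    push_cast
    simp only [hermiteP, Nat.cast_add, Nat.cast_one, map_mul, map_sub, map_add, map_natCast,
      map_one, map_ofNat]
    ring

lemma hasDerivAt_one_add_two_mul_sq (x : ℝ) :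
    HasDerivAt (fun y : ℝ => 1 + 2 * y ^ 2) (4 * x) x := by
  refine (((hasDerivAt_pow 2 x).const_mul (2 : ℝ)).const_add 1).congr_deriv ?_
  ring

lemma integrable_eval_sq_mul_exp_neg_sq_div_sq (P : ℝ[X]) :
    Integrable fun x : ℝ => P.eval x ^ 2 * (Real.exp (-x ^ 2) / (1 + 2 * x ^ 2) ^ 2) := by
  have := integrable_eval_mul_exp_neg_sq_div (P ^ 2)
    (g := fun x => (1 + 2 * x ^ 2) ^ 2) (by fun_prop) fun x => one_le_pow₀ (by nlinarith)
  simp only [eval_pow, mul_div_assoc] at this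
  exact this

lemma integral_sq_pE_zero :
    ∫ x : ℝ, (pE 0).eval x ^ 2 * (Real.exp (-x ^ 2) / (1 + 2 * x ^ 2) ^ 2)
      = Real.sqrt Real.pi / 2 := by
  have hderiv (x : ℝ) : HasDerivAt
      (fun y => (C (-1 / 2 : ℝ) * X).eval y * Real.exp (-y ^ 2) / (1 + 2 * y ^ 2))
      ((C (1 / 2)).eval x * Real.exp (-x ^ 2)
        - (pE 0).eval x ^ 2 * (Real.exp (-x ^ 2) / (1 + 2 * x ^ 2) ^ 2)) x := by
    refine ((hasDerivAt_eval_mul_exp_neg_sq _ x).div (hasDerivAt_one_add_two_mul_sq x)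
      (by positivity)).congr_deriv ?_
    simp only [pE_zero, derivative_mul, derivative_C, derivative_X, eval_sub, eval_mul, eval_C,
      eval_X, eval_add, eval_one, eval_zero]
    field_simp
    ring
  rw [integral_eq_gaussianFunctional_of_hasDerivAt _ _ (by fun_prop) (fun x => by nlinarith)
    (integrable_eval_sq_mul_exp_neg_sq_div_sq _) hderiv]
  rw [← mul_one (C _), ← smul_eq_C_mul, map_smul, gaussianFunctional_one, smul_eq_mul]
  ring

lemma integral_sq_pE_natCast_add_three (m : ℕ) :
    ∫ x : ℝ, (pE ((m + 3 : ℕ) : ℤ)).eval x ^ 2 * (Real.exp (-x ^ 2) / (1 + 2 * x ^ 2) ^ 2)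
      = 4 * gaussianFunctional (hermiteP (m + 1) ^ 2)
        + 16 * gaussianFunctional (hermiteP m ^ 2) := by
  have hderiv (x : ℝ) : HasDerivAt
      (fun y => (C 16 * X * hermiteP m ^ 2).eval y * Real.exp (-y ^ 2) / (1 + 2 * y ^ 2))
      ((C 4 * hermiteP (m + 1) ^ 2 + C 16 * hermiteP m ^ 2).eval x * Real.exp (-x ^ 2)
        - (pE ((m + 3 : ℕ) : ℤ)).eval x ^ 2 * (Real.exp (-x ^ 2) / (1 + 2 * x ^ 2) ^ 2)) x := by
    refine ((hasDerivAt_eval_mul_exp_neg_sq _ x).div (hasDerivAt_one_add_two_mul_sq x)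
      (by positivity)).congr_deriv ?_
    simp only [pE_natCast_add_three, derivative_mul, derivative_pow, derivative_hermiteP m,
      derivative_C, derivative_X, eval_add, eval_sub, eval_mul, eval_pow, eval_C, eval_X, eval_one,
      eval_zero]
    field_simp
    ring
  rw [integral_eq_gaussianFunctional_of_hasDerivAt _ _ (by fun_prop) (fun x => by nlinarith)
    (integrable_eval_sq_mul_exp_neg_sq_div_sq _) hderiv, map_add, ← smul_eq_C_mul, ← smul_eq_C_mul,
    map_smul, map_smul, smul_eq_mul, smul_eq_mul]

/-- the squared norm of `p_n` with respect to `e^{-x²}/(1+2x²)²` equals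
`√π · 2ⁿ n! / ((n-1)(n-2))` for `n ∉ {1,2}`. -/
theorem exceptional_hermite_norm (n : ℕ) (h1 : n ≠ 1) (h2 : n ≠ 2) :
    ∫ x : ℝ, ((pE (n : ℤ)).eval x) ^ 2 * (Real.exp (-x ^ 2) / (1 + 2 * x ^ 2) ^ 2)
      = Real.sqrt Real.pi * 2 ^ n * (Nat.factorial n : ℝ) / (((n : ℝ) - 1) * ((n : ℝ) - 2)) := by
  obtain rfl | ⟨m, rfl⟩ : n = 0 ∨ ∃ m, n = m + 3 := by
    rcases n with _ | _ | _ | m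
    exacts [.inl rfl, (h1 rfl).elim, (h2 rfl).elim, .inr ⟨m, rfl⟩]
  · rw [Nat.cast_zero, integral_sq_pE_zero]
    norm_num
  · have hden : (((m + 3 : ℕ) : ℝ) - 1) * (((m + 3 : ℕ) : ℝ) - 2) = (m + 2) * (m + 1) := by
      push_cast; ring
    rw [hden, integral_sq_pE_natCast_add_three, gaussianFunctional_hermiteP_sq,
      gaussianFunctional_hermiteP_sq, Nat.factorial_succ (m + 2), Nat.factorial_succ (m + 1),
      Nat.factorial_succ m]
    push_cast
    field_simp
    ring
end

section
/- For α > 0 and distinct m, n ≥ 1, the exceptional Laguerre polynomials r_n(x) = -(x+α+1) L_{n-1}^{(α)}(x) + L_{n-2}^{(α)}(x) satisfy ∫_0^∞ r_m(x) r_n(x) e^{-x} x^α / (x+α)^2 dx = 0. -/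
open Polynomial MeasureTheory

/-- Classical (generalized) Laguerre polynomials
`L_n^{(α)}(x) = Σ_{k=0}^n (-1)^k C(n+α, n-k) x^k / k!`. -/
noncomputable def laguerreP (α : ℝ) (n : ℕ) : Polynomial ℝ :=
  ∑ k ∈ Finset.range (n + 1),
    C ((-1 : ℝ) ^ k *
        (∏ i ∈ Finset.range (n - k), (α + (k : ℝ) + 1 + (i : ℝ))) /
        ((Nat.factorial (n - k) : ℝ) * (Nat.factorial k : ℝ))) * X ^ k

/-- `L_k^{(α)}` extended by `0` for `k < 0`. -/
noncomputable def Lz (α : ℝ) (k : ℤ) : Polynomial ℝ :=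
  if k < 0 then 0 else laguerreP α k.toNat

/-- Exceptional Laguerre polynomials `r_n = -(x+α+1) L_{n-1}^{(α)} + L_{n-2}^{(α)}`. -/
noncomputable def rE (α : ℝ) (k : ℤ) : Polynomial ℝ :=
  -(X + C (α + 1)) * Lz α (k - 1) + Lz α (k - 2)

/-!
Write `w(x) = e^{-x} x^α / (x+α)²`. The classical relations `L_k' = L_{k-1}' - L_{k-1}` and
`x L_k' = k L_k - (k+α) L_{k-1}` hold for every integer `k` once `L_k` is extended by `0`, and
they give the second-order equation
`x(x+α) r'' + ((α+1-x)(x+α) - 2x) r' + ((k-1)(x+α) + x - α) r = 0` for `r = r_k`,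
whose leading part is `(x+α) (x w r')' / w`. The Lagrange identity then makes
`(m - n) r_m r_n w` the derivative of `x w W(r_m, r_n)`, with `W` the Wronskian, and this
boundary term vanishes at `0` (like `x^{α+1}`) and at `∞` (like `e^{-x}` times a power).
-/

open scoped Nat

lemma prod_range_succ_add_one_add (t : ℝ) (c : ℕ) :
    ∏ i ∈ Finset.range (c + 1), (t + 1 + i)
      = (c + 1) * ∏ i ∈ Finset.range c, (t + 1 + i) + ∏ i ∈ Finset.range (c + 1), (t + i) := by
  rw [Finset.prod_range_succ, Finset.prod_range_succ' (fun i : ℕ => t + i)]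
  push_cast
  simp only [← add_assoc, add_right_comm t 1]
  ring

lemma coeff_X_mul_derivative {R : Type*} [CommSemiring R] (p : R[X]) (k : ℕ) :
    (X * derivative p).coeff k = k * p.coeff k := by
  cases k <;> simp [coeff_X_mul, coeff_derivative, mul_comm]

section Laguerre

variable (α : ℝ)

lemma coeff_laguerreP (n k : ℕ) :
    (laguerreP α n).coeff k = if k ≤ n then
      (-1) ^ k * (∏ i ∈ Finset.range (n - k), (α + k + 1 + i)) / ((n - k)! * k !) else 0 := by
  simp only [laguerreP, finsetSum_coeff, coeff_C_mul, coeff_X_pow, mul_ite, mul_one, mul_zero,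
    Finset.sum_ite_eq, Finset.mem_range, Nat.lt_succ_iff]

lemma coeff_laguerreP_of_le {n k : ℕ} (h : k ≤ n) :
    (laguerreP α n).coeff k =
      (-1) ^ k * (∏ i ∈ Finset.range (n - k), (α + k + 1 + i)) / ((n - k)! * k !) := by
  rw [coeff_laguerreP, if_pos h]

lemma coeff_laguerreP_of_lt {n k : ℕ} (h : n < k) : (laguerreP α n).coeff k = 0 := by
  rw [coeff_laguerreP, if_neg h.not_ge]

lemma laguerreP_zero : laguerreP α 0 = 1 := by
  simp [laguerreP]

lemma derivative_laguerreP_succ (n : ℕ) :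
    derivative (laguerreP α (n + 1)) = derivative (laguerreP α n) - laguerreP α n := by
  ext k
  rw [coeff_derivative, coeff_sub, coeff_derivative]
  rcases Nat.lt_or_ge n k with h | h
  · simp [coeff_laguerreP_of_lt, h, Nat.lt_succ_of_lt h]
  obtain ⟨c, rfl⟩ := Nat.exists_eq_add_of_le h
  rw [coeff_laguerreP_of_le α (by omega : k + 1 ≤ k + c + 1), coeff_laguerreP_of_le α h,
    Nat.add_sub_add_right, Nat.add_sub_cancel_left]
  rcases c with _ | d
  · rw [coeff_laguerreP_of_lt α (by omega)]
    simp only [Finset.range_zero, Finset.prod_empty, Nat.factorial_zero, Nat.factorial_succ,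
      pow_succ]
    push_cast
    field_simp
    ring
  · rw [coeff_laguerreP_of_le α (by omega : k + 1 ≤ k + (d + 1)),
      show k + (d + 1) - (k + 1) = d by omega]
    have hshift : ∀ i : ℕ, α + ((k + 1 : ℕ) : ℝ) + 1 + i = α + k + 1 + 1 + i := fun i => by
      push_cast; ring
    simp only [hshift, prod_range_succ_add_one_add (α + k + 1) d]
    field_simp
    push_cast [Nat.factorial_succ]
    ring

lemma X_mul_derivative_laguerreP_succ (n : ℕ) :
    X * derivative (laguerreP α (n + 1))
      = C ((n : ℝ) + 1) * laguerreP α (n + 1) - C ((n : ℝ) + 1 + α) * laguerreP α n := by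
  ext k
  rw [coeff_X_mul_derivative, coeff_sub, coeff_C_mul, coeff_C_mul]
  rcases Nat.lt_or_ge n k with h | h
  · rw [coeff_laguerreP_of_lt α h]
    rcases (Nat.succ_le_of_lt h).eq_or_lt with rfl | h'
    · push_cast
      ring
    · simp [coeff_laguerreP_of_lt α h']
  obtain ⟨c, rfl⟩ := Nat.exists_eq_add_of_le h
  rw [coeff_laguerreP_of_le α (by omega : k ≤ k + c + 1), coeff_laguerreP_of_le α h,
    show k + c + 1 - k = c + 1 by omega, Nat.add_sub_cancel_left, Finset.prod_range_succ]
  field_simp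
  push_cast [Nat.factorial_succ]
  ring

lemma Lz_natCast (n : ℕ) : Lz α n = laguerreP α n := by
  simp [Lz]

lemma Lz_of_neg {k : ℤ} (hk : k < 0) : Lz α k = 0 := if_pos hk

lemma Lz_zero : Lz α 0 = 1 := by
  simpa using Lz_natCast α 0 |>.trans (laguerreP_zero α)

lemma derivative_Lz (k : ℤ) :
    derivative (Lz α k) = derivative (Lz α (k - 1)) - Lz α (k - 1) := by
  obtain hk | rfl | hk := lt_trichotomy k 0
  · simp [Lz_of_neg α hk, Lz_of_neg α (by omega : k - 1 < 0)]
  · simp [Lz_zero, Lz_of_neg α (by norm_num : (-1 : ℤ) < 0)]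
  · obtain ⟨n, rfl⟩ := Int.eq_succ_of_zero_lt hk
    rw [add_sub_cancel_right, ← Nat.cast_succ, Lz_natCast, Lz_natCast]
    exact derivative_laguerreP_succ α n

lemma X_mul_derivative_Lz (k : ℤ) :
    X * derivative (Lz α k) = C (k : ℝ) * Lz α k - C ((k : ℝ) + α) * Lz α (k - 1) := by
  obtain hk | rfl | hk := lt_trichotomy k 0
  · simp [Lz_of_neg α hk, Lz_of_neg α (by omega : k - 1 < 0)]
  · simp [Lz_zero, Lz_of_neg α (by norm_num : (-1 : ℤ) < 0)]
  · obtain ⟨n, rfl⟩ := Int.eq_succ_of_zero_lt hk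
    rw [add_sub_cancel_right, ← Nat.cast_succ, Lz_natCast, Lz_natCast]
    push_cast
    exact X_mul_derivative_laguerreP_succ α n

lemma Lz_ode (k : ℤ) :
    X * derivative (derivative (Lz α k)) + (C (α + 1) - X) * derivative (Lz α k)
      + C (k : ℝ) * Lz α k = 0 := by
  have h₁ := derivative_Lz α k
  have h₂ := X_mul_derivative_Lz α k
  have h₂' := congrArg derivative h₂
  simp only [derivative_mul, derivative_X, derivative_C, derivative_sub, zero_mul, zero_add,
    one_mul] at h₂'
  simp only [C_add, C_1] at h₂ h₂' ⊢
  linear_combination h₂' + (C (k : ℝ) + C α) * h₁ - h₂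

lemma rE_ode (k : ℤ) :
    X * (X + C α) * derivative (derivative (rE α k))
      + ((C (α + 1) - X) * (X + C α) - 2 * X) * derivative (rE α k)
      + (C ((k : ℝ) - 1) * (X + C α) + (X - C α)) * rE α k = 0 := by
  have hode := Lz_ode α (k - 1)
  have hd := derivative_Lz α (k - 1)
  have hXd := X_mul_derivative_Lz α (k - 1)
  have hdd := congrArg derivative hd
  rw [sub_sub, one_add_one_eq_two] at hd hXd hdd
  push_cast at hode hXd
  simp only [rE, derivative_add, derivative_sub, derivative_mul, derivative_neg, derivative_X,
    derivative_C, derivative_one, derivative_zero, C_add, C_sub, C_1] at hode hXd hdd ⊢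
  linear_combination -(X + C α) ^ 2 * hode + (X + C α) * hXd
    + (2 * X - (C α + 1) * (X + C α)) * hd - X * (X + C α) * hdd

end Laguerre

lemma lagrange_identity_wronskian {R : Type*} [CommRing R] {A B E V p q μ ν : R[X]}
    (hp : A * derivative (derivative p) + B * derivative p + (μ * E + V) * p = 0)
    (hq : A * derivative (derivative q) + B * derivative q + (ν * E + V) * q = 0) :
    A * derivative (wronskian p q) + B * wronskian p q = E * ((μ - ν) * (p * q)) := by
  simp only [wronskian, derivative_sub, derivative_mul]
  linear_combination p * hq - q * hp

open Real Set Filter Topology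

noncomputable def xLaguerreWeight (α x : ℝ) : ℝ :=
  exp (-x) * x ^ α / (x + α) ^ 2

lemma integrableOn_pow_mul_xLaguerreWeight {α : ℝ} (hα : 0 < α) (k : ℕ) :
    IntegrableOn (fun x => x ^ k * xLaguerreWeight α x) (Ioi 0) := by
  have hΓ : IntegrableOn (fun x : ℝ => exp (-x) * x ^ (α + k)) (Ioi 0) := by
    simpa using GammaIntegral_convergent (s := α + k + 1) (by positivity)
  refine IntegrableOn.congr_fun (hΓ.mul_bdd (g := fun x => ((x + α) ^ 2)⁻¹) (c := (α ^ 2)⁻¹) ?_ ?_)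
    (fun x (hx : 0 < x) => ?_) measurableSet_Ioi
  · exact (ContinuousOn.inv₀ (by fun_prop) fun x (hx : 0 < x) => by positivity).aestronglyMeasurable
      measurableSet_Ioi
  · refine (ae_restrict_iff' measurableSet_Ioi).2 (ae_of_all _ fun x (hx : 0 < x) => ?_)
    rw [norm_inv, norm_pow, Real.norm_of_nonneg (by positivity)]
    gcongr
    linarith
  · rw [xLaguerreWeight, rpow_add_natCast hx.ne']
    ring

lemma integrableOn_eval_mul_xLaguerreWeight {α : ℝ} (hα : 0 < α) (p : ℝ[X]) :
    IntegrableOn (fun x => p.eval x * xLaguerreWeight α x) (Ioi 0) := by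
  simp_rw [eval_eq_sum_range, Finset.sum_mul, mul_assoc]
  exact integrable_finsetSum _ fun k _ =>
    (integrableOn_pow_mul_xLaguerreWeight hα k).const_mul (p.coeff k)

lemma tendsto_eval_mul_rpow_mul_exp_neg_atTop (p : ℝ[X]) (s : ℝ) :
    Tendsto (fun x => p.eval x * (x ^ s * exp (-x))) atTop (𝓝 0) := by
  simp_rw [eval_eq_sum_range, Finset.sum_mul]
  rw [← Finset.sum_const_zero (s := Finset.range (p.natDegree + 1))]
  refine tendsto_finsetSum _ fun k _ => ?_
  have h := (tendsto_rpow_mul_exp_neg_mul_atTop_nhds_zero (s + k) 1 one_pos).const_mul (p.coeff k)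
  rw [mul_zero] at h
  refine h.congr' ((eventually_gt_atTop 0).mono fun x (hx : 0 < x) => ?_)
  rw [rpow_add_natCast hx.ne']
  ring_nf

lemma tendsto_mul_eval_mul_xLaguerreWeight_atTop (α : ℝ) (p : ℝ[X]) :
    Tendsto (fun x => x * p.eval x * xLaguerreWeight α x) atTop (𝓝 0) := by
  have hinv : Tendsto (fun x : ℝ => ((x + α) ^ 2)⁻¹) atTop (𝓝 0) :=
    tendsto_inv_atTop_zero.comp
      ((tendsto_pow_atTop two_ne_zero).comp (tendsto_atTop_add_const_right _ α tendsto_id))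
  rw [← mul_zero 0]
  refine ((tendsto_eval_mul_rpow_mul_exp_neg_atTop (X * p) α).mul hinv).congr fun x => ?_
  simp only [xLaguerreWeight, eval_mul, eval_X]
  ring

/-- `x ↦ x · w(x)` is the Sturm–Liouville coefficient of the exceptional Laguerre operator:
its logarithmic derivative is `((α+1-x)(x+α) - 2x) / (x(x+α))`. -/
lemma hasDerivAt_mul_eval_mul_xLaguerreWeight {α x : ℝ} (hx : 0 < x) (hxα : x + α ≠ 0)
    {W P : ℝ[X]} (hWP : X * (X + C α) * derivative W
      + ((C (α + 1) - X) * (X + C α) - 2 * X) * W = (X + C α) * P) :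
    HasDerivAt (fun y => y * W.eval y * xLaguerreWeight α y)
      (P.eval x * xLaguerreWeight α x) x := by
  have hw := ((hasDerivAt_neg x).exp.mul (hasDerivAt_rpow_const (p := α) (Or.inl hx.ne'))).div
    (((hasDerivAt_id x).add_const α).pow 2) (pow_ne_zero 2 hxα)
  refine (((hasDerivAt_id x).mul (W.hasDerivAt x)).mul hw).congr_deriv ?_
  have hWPx := congrArg (eval x) hWP
  simp only [eval_add, eval_sub, eval_mul, eval_X, eval_C, eval_ofNat] at hWPx
  rw [rpow_sub_one hx.ne']
  simp only [xLaguerreWeight, Pi.mul_apply, Pi.div_apply, Pi.pow_apply, id, Nat.cast_ofNat]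
  field_simp
  linear_combination (x + α) * hWPx

lemma integral_eval_mul_xLaguerreWeight_eq_zero {α : ℝ} (hα : 0 < α) {W P : ℝ[X]}
    (hWP : X * (X + C α) * derivative W
      + ((C (α + 1) - X) * (X + C α) - 2 * X) * W = (X + C α) * P) :
    ∫ x in Ioi 0, P.eval x * xLaguerreWeight α x = 0 := by
  have hcont : ContinuousAt (fun y => y * W.eval y * xLaguerreWeight α y) 0 := by
    have : ContinuousAt (fun y : ℝ => y ^ α) 0 := continuousAt_rpow_const _ _ (Or.inr hα.le)
    unfold xLaguerreWeight
    exact (by fun_prop : ContinuousAt (fun y => y * W.eval y) 0).mul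
      (ContinuousAt.div (by fun_prop) (by fun_prop) (by positivity))
  simpa using integral_Ioi_of_hasDerivAt_of_tendsto hcont.continuousWithinAt
    (fun x (hx : 0 < x) => hasDerivAt_mul_eval_mul_xLaguerreWeight hx (by positivity) hWP)
    (integrableOn_eval_mul_xLaguerreWeight hα P) (tendsto_mul_eval_mul_xLaguerreWeight_atTop α W)

theorem exceptional_laguerre_orthogonal_general (α : ℝ) (hα : 0 < α) (m n : ℕ)
    (hmn : m ≠ n) :
    ∫ x in Set.Ioi (0 : ℝ), (rE α (m : ℤ)).eval x * (rE α (n : ℤ)).eval x *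
      (Real.exp (-x) * x ^ α / (x + α) ^ 2) = 0 := by
  have hint := integral_eval_mul_xLaguerreWeight_eq_zero hα
    (lagrange_identity_wronskian (rE_ode α m) (rE_ode α n))
  simp_rw [eval_mul, eval_sub, eval_C, mul_assoc, integral_const_mul, mul_eq_zero] at hint
  simpa only [mul_assoc, xLaguerreWeight] using
    hint.resolve_left (by simpa [sub_eq_zero] using hmn)

/-- orthogonality of the exceptional Laguerre polynomials with respect
to `e^{-x} x^α / (x+α)²` on `(0, ∞)`. -/
theorem exceptional_laguerre_orthogonal (α : ℝ) (hα : 0 < α) (m n : ℕ)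
    (hm : 1 ≤ m) (hn : 1 ≤ n) (hmn : m ≠ n) :
    ∫ x in Set.Ioi (0 : ℝ), (rE α (m : ℤ)).eval x * (rE α (n : ℤ)).eval x *
      (Real.exp (-x) * x ^ α / (x + α) ^ 2) = 0 :=
  exceptional_laguerre_orthogonal_general α hα m n hmn
end
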